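/- (Flagged Jacobi–Trudi identity for factorial difference characters.) Let n ≥ 1, let R be a commutative ring, let x_1, …, x_n be invertible elements of R with x̄_i := x_i^{−1}, let a = (a_1, a_2, …) be a sequence in R, and let λ = (λ_1 ≥ … ≥ λ_n ≥ 0) be a partition with at most n parts. Then det_{1≤i,j≤n} ( (x_i|a)^{λ_j+n−j} − (x̄_i|a)^{λ_j+n−j} ) = ∏_{1≤i<j≤n}(x_i + x̄_i − x_j − x̄_j) · det_{1≤i,j≤n} ( h^{eod}_{λ_j−j+i}(x^{(i)}, x̄^{(i)}|a) ), where x^{(i)} := (x_i, …, x_n) and x̄^{(i)} := (x̄_i, …, x̄_n). -/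

import Mathlib

open Finset

noncomputable def geom {R : Type*} [CommRing R] (x : R) : PowerSeries R :=
  PowerSeries.mk fun k => x ^ k

noncomputable def lin {R : Type*} [CommRing R] (a : R) : PowerSeries R :=
  1 + PowerSeries.C a * PowerSeries.X

noncomputable def facpow {R : Type*} [CommRing R] (x : R) (a : ℕ → R) (m : ℕ) : R :=
  ∏ j ∈ Finset.range m, (x + a (j + 1))

noncomputable def hgl {R : Type*} [CommRing R] {n : ℕ} (x : Fin n → R) (a : ℕ → R) (m : ℤ) : R :=
  if 0 ≤ m then
    PowerSeries.coeff m.toNat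
      ((∏ i, geom (x i)) * ∏ j ∈ Finset.range (n + m.toNat - 1), lin (a (j + 1)))
  else 0

noncomputable def hsp {R : Type*} [CommRing R] {n : ℕ} (x : Fin n → Rˣ) (a : ℕ → R) (m : ℤ) : R :=
  if 0 ≤ m then
    PowerSeries.coeff m.toNat
      ((∏ i, geom ((x i : R)) * geom (((x i)⁻¹ : Rˣ) : R)) *
        ∏ j ∈ Finset.range (n + m.toNat - 1), lin (a (j + 1)))
  else 0

noncomputable def hoo {R : Type*} [CommRing R] {n : ℕ} (x : Fin n → Rˣ) (a : ℕ → R) (m : ℤ) : R :=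
  if 0 ≤ m then
    PowerSeries.coeff m.toNat
      ((1 + PowerSeries.X) * (∏ i, geom ((x i : R)) * geom (((x i)⁻¹ : Rˣ) : R)) *
        ∏ j ∈ Finset.range (n + m.toNat - 1), lin (a (j + 1)))
  else 0

noncomputable def heo {R : Type*} [CommRing R] {n : ℕ} (x : Fin n → Rˣ) (a : ℕ → R) (m : ℤ) : R :=
  if 0 ≤ m then
    if h : n = 1 then
      (PowerSeries.coeff m.toNat
        ((geom ((x ⟨0, by omega⟩ : Rˣ) : R) + geom (((x ⟨0, by omega⟩)⁻¹ : Rˣ) : R)) *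
          ∏ j ∈ Finset.range m.toNat, lin (a (j + 1))))
        - (if m = 0 then 1 else 0)
    else
      PowerSeries.coeff m.toNat
        ((1 - PowerSeries.X ^ 2) * (∏ i, geom ((x i : R)) * geom (((x i)⁻¹ : Rˣ) : R)) *
          ∏ j ∈ Finset.range (n + m.toNat - 1), lin (a (j + 1)))
  else 0

noncomputable def heod {R : Type*} [CommRing R] {n : ℕ} (x : Fin n → Rˣ) (a : ℕ → R) (m : ℤ) : R :=
  if 0 < m then
    if h : 0 < n then
      PowerSeries.coeff m.toNat
        ((geom ((x ⟨0, h⟩ : Rˣ) : R) - geom (((x ⟨0, h⟩)⁻¹ : Rˣ) : R)) *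
          (∏ i ∈ Finset.univ.filter (fun i : Fin n => i ≠ ⟨0, h⟩),
            geom ((x i : R)) * geom (((x i)⁻¹ : Rˣ) : R)) *
          ∏ j ∈ Finset.range (n + m.toNat - 1), lin (a (j + 1)))
    else 0
  else 0

/-! Put `z i = x i + (x i)⁻¹` and `E i = 1 / ((1 - x i t) (1 - (x i)⁻¹ t)) = 1 / (1 - z i t + t²)`.
Since `(x|a)^m` is the coefficient of `t^m` in `∏_{k ≤ m} (1 + a_k t) / (1 - x t)` and
`1 / (1 - x t) - 1 / (1 - x⁻¹ t) = (x - x⁻¹) t E`, both matrices have entries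
`(x i - (x i)⁻¹) φ_j (t^#T ∏_{l ∈ T} E l)`, with `T = {i}` on the left, `T = {i, …, n}` on the
right, and `φ_j` the coefficient of `t^N` after multiplication by `∏_{k ≤ N} (1 + a_k t)`, where
`N = λ_j + n - j`. The relation `E i - E k = (z i - z k) t E i E k` is a divided-difference
recursion for these functions of `T`: eliminating with the rows `n, n - 1, …, 1` in turn transforms
the left matrix into the right one and collects the factor `∏_{i<j} (z i - z j)`.
-/

open PowerSeries

lemma prod_Ici_eq_prod_shift {M : Type*} [CommMonoid M] {n : ℕ} (f : Fin n → M) (i : Fin n) :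
    ∏ l ∈ Ici i, f l = ∏ k : Fin (n - i), f ⟨i + k, by have := k.isLt; omega⟩ := by
  refine prod_nbij' (fun l => ⟨l - i, by have := l.isLt; omega⟩)
    (fun k => ⟨i + k, by have := k.isLt; omega⟩) ?_ ?_ ?_ ?_ ?_ <;>
    simp only [mem_Ici, mem_univ, Fin.le_def, Fin.ext_iff, implies_true]
  · omega
  · omega
  · omega
  · exact fun l hl => congrArg f (Fin.ext (by simp only; omega))


section DividedDifferences

variable {R : Type*} [CommRing R] {n : ℕ}

def IsDividedDifferenceFamily (z : Fin n → R) (g : Finset (Fin n) → Fin n → R) : Prop :=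
  ∀ (S : Finset (Fin n)) (i k : Fin n), i ∉ S → k ∉ S → i ≠ k →
    g (insert i S) - g (insert k S) = (z i - z k) • g (insert i (insert k S))

/-- The matrix with rows `g {i}` after the pivot rows `k, k + 1, …` have been eliminated from the
rows above them. -/
def elimRows (g : Finset (Fin n) → Fin n → R) (k : ℕ) : Matrix (Fin n) (Fin n) R :=
  Matrix.of fun i => g (insert i (univ.filter fun l : Fin n => i < l ∧ k ≤ (l : ℕ)))

lemma det_elimRows_succ {z : Fin n → R} {g : Finset (Fin n) → Fin n → R}
    (hg : IsDividedDifferenceFamily z g) (k : Fin n) :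
    (elimRows g (k + 1)).det = (∏ i ∈ Iio k, (z i - z k)) * (elimRows g k).det := by
  have hrows : (elimRows g (k + 1)).det =
      (Matrix.of fun i j => (if i ∈ Iio k then z i - z k else 1) * elimRows g k i j).det := by
    refine Matrix.det_eq_of_forall_row_eq_smul_add_const (fun i => if i < k then 1 else 0) k
      (by simp) fun i j => ?_
    by_cases hik : i < k
    · have hsucc : (univ.filter fun l : Fin n => i < l ∧ k + 1 ≤ (l : ℕ)) = Ioi k := by
        ext l; simp only [mem_filter, mem_univ, true_and, mem_Ioi, Fin.lt_def]; omega
      have hself : (univ.filter fun l : Fin n => i < l ∧ k ≤ (l : ℕ)) = insert k (Ioi k) := by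
        ext l
        simp only [mem_filter, mem_univ, true_and, mem_insert, mem_Ioi, Fin.lt_def, Fin.ext_iff]
        omega
      have hpivot : (univ.filter fun l : Fin n => k < l ∧ k ≤ (l : ℕ)) = Ioi k := by
        ext l; simp only [mem_filter, mem_univ, true_and, mem_Ioi, Fin.lt_def]; omega
      have := congrFun (hg (Ioi k) i k (by simp [hik.le]) (by simp) hik.ne) j
      simp only [elimRows, Matrix.of_apply, mem_Iio, hik, if_true, lt_irrefl, if_false,
        hsucc, hself, hpivot, Pi.sub_apply, Pi.smul_apply, smul_eq_mul] at this ⊢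
      linear_combination this
    · have hsame : (univ.filter fun l : Fin n => i < l ∧ k + 1 ≤ (l : ℕ)) =
          univ.filter fun l : Fin n => i < l ∧ k ≤ (l : ℕ) := by
        ext l; simp only [mem_filter, mem_univ, true_and, Fin.lt_def] at hik ⊢; omega
      simp only [elimRows, Matrix.of_apply, mem_Iio, hik, if_false, hsame]
      ring
  rw [hrows, Matrix.det_mul_column, prod_ite_mem, univ_inter]

lemma det_elimRows {z : Fin n → R} {g : Finset (Fin n) → Fin n → R}
    (hg : IsDividedDifferenceFamily z g) {k : ℕ} (hk : k ≤ n) :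
    (elimRows g k).det = (∏ j ∈ univ.filter fun j : Fin n => (j : ℕ) < k,
      ∏ i ∈ Iio j, (z i - z j)) * (elimRows g 0).det := by
  induction k with
  | zero => simp
  | succ k ih =>
    have hinsert : (univ.filter fun j : Fin n => (j : ℕ) < k + 1) =
        insert ⟨k, hk⟩ (univ.filter fun j : Fin n => (j : ℕ) < k) := by
      ext j
      simp only [mem_filter, mem_univ, true_and, mem_insert, Fin.ext_iff]
      omega
    rw [show k + 1 = ((⟨k, hk⟩ : Fin n) : ℕ) + 1 from rfl, det_elimRows_succ hg,
      ih (by omega), hinsert, prod_insert (by simp), mul_assoc]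

theorem det_of_singleton_eq_prod_mul_det_of_Ici {z : Fin n → R}
    {g : Finset (Fin n) → Fin n → R} (hg : IsDividedDifferenceFamily z g) :
    (Matrix.of fun i => g {i}).det =
      (∏ i, ∏ j ∈ Ioi i, (z i - z j)) * (Matrix.of fun i => g (Ici i)).det := by
  have hlast : elimRows g n = Matrix.of fun i => g {i} := by
    ext i j
    have hempty : (univ.filter fun l : Fin n => i < l ∧ n ≤ (l : ℕ)) = ∅ :=
      filter_eq_empty_iff.mpr fun l _ h => l.isLt.not_ge h.2
    simp only [elimRows, Matrix.of_apply, hempty]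
    rfl
  have hfirst : elimRows g 0 = Matrix.of fun i => g (Ici i) := by
    ext i j
    simp [elimRows, ← Ioi_insert, filter_lt_eq_Ioi]
  rw [← hlast, det_elimRows hg le_rfl, hfirst, filter_true_of_mem fun j _ => j.isLt]
  congr 1
  exact prod_comm' fun j i => by simp [and_comm]

end DividedDifferences

section Series

variable {R : Type*} [CommRing R]

lemma geom_mul_one_sub (x : R) : geom x * (1 - C x * X) = 1 := by
  ext k
  rcases k with _ | k
  · simp [geom]
  · simp [geom, mul_sub, ← mul_assoc, mul_comm (C x), coeff_succ_mul_X, pow_succ]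

lemma geom_sub_geom (x y : R) : geom x - geom y = C (x - y) * X * (geom x * geom y) := by
  rw [map_sub]
  linear_combination geom y * geom_mul_one_sub x - geom x * geom_mul_one_sub y

lemma coeff_prod_lin_of_card_lt {ι : Type*} (s : Finset ι) (b : ι → R) {k : ℕ}
    (hk : #s < k) : coeff k (∏ j ∈ s, lin (b j)) = 0 := by
  classical
  induction s using Finset.induction generalizing k with
  | empty => simp [coeff_one, (Nat.zero_lt_of_lt hk).ne']
  | insert i s hi ih =>
    obtain ⟨k, rfl⟩ : ∃ k', k = k' + 1 := ⟨k - 1, by omega⟩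
    rw [card_insert_of_notMem hi] at hk
    have hlin : lin (b i) * ∏ j ∈ s, lin (b j) =
        ∏ j ∈ s, lin (b j) + C (b i) * ((∏ j ∈ s, lin (b j)) * X) := by
      rw [lin]; ring
    rw [prod_insert hi, hlin, map_add, coeff_C_mul, coeff_succ_mul_X, ih (by omega),
      ih (by omega), mul_zero, add_zero]

lemma facpow_eq_coeff (x : R) (a : ℕ → R) (m : ℕ) :
    facpow x a m = coeff m (geom x * ∏ j ∈ range m, lin (a (j + 1))) := by
  induction m with
  | zero => simp [facpow, geom]
  | succ m ih =>
    set Q := ∏ j ∈ range m, lin (a (j + 1))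
    have hstep : geom x * (Q * lin (a (m + 1))) = Q + C (x + a (m + 1)) * (geom x * Q * X) := by
      rw [lin, map_add]
      linear_combination Q * geom_mul_one_sub x
    rw [facpow, prod_range_succ, ← facpow, ih, prod_range_succ, hstep, map_add, coeff_C_mul,
      coeff_succ_mul_X, coeff_prod_lin_of_card_lt _ _ (by simp), zero_add, mul_comm]

noncomputable def symGeom (u : Rˣ) : R⟦X⟧ := geom (u : R) * geom ((u⁻¹ : Rˣ) : R)

lemma symGeom_mul (u : Rˣ) : symGeom u * (1 - C ((u : R) + (u⁻¹ : Rˣ)) * X + X ^ 2) = 1 := by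
  have hu : C (u : R) * C ((u⁻¹ : Rˣ) : R) = 1 := by rw [← map_mul, Units.mul_inv, map_one]
  rw [symGeom, map_add]
  set v : R := ((u⁻¹ : Rˣ) : R)
  linear_combination (geom v * (1 - C v * X)) * geom_mul_one_sub (u : R) + geom_mul_one_sub v
    - (geom (u : R) * geom v * X ^ 2) * hu

lemma symGeom_sub_symGeom (u v : Rˣ) :
    symGeom u - symGeom v =
      C ((u : R) + (u⁻¹ : Rˣ) - ((v : R) + (v⁻¹ : Rˣ))) * X * (symGeom u * symGeom v) := by
  rw [map_sub]
  linear_combination symGeom v * symGeom_mul u - symGeom u * symGeom_mul v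

lemma X_pow_card_mul_prod_insert_sub_insert {ι : Type*} [DecidableEq ι] (E : ι → R⟦X⟧)
    (z : ι → R) (hE : ∀ i k, E i - E k = C (z i - z k) * X * (E i * E k))
    {S : Finset ι} {i k : ι} (hi : i ∉ S) (hk : k ∉ S) (hik : i ≠ k) :
    X ^ #(insert i S) * ∏ l ∈ insert i S, E l - X ^ #(insert k S) * ∏ l ∈ insert k S, E l =
      C (z i - z k) * (X ^ #(insert i (insert k S)) * ∏ l ∈ insert i (insert k S), E l) := by
  have hi' : i ∉ insert k S := by simp [hik, hi]
  rw [card_insert_of_notMem hi, card_insert_of_notMem hk, card_insert_of_notMem hi',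
    card_insert_of_notMem hk, prod_insert hi, prod_insert hk, prod_insert hi', prod_insert hk]
  linear_combination X ^ (#S + 1) * (∏ l ∈ S, E l) * hE i k

lemma facpow_sub_facpow_inv (u : Rˣ) (a : ℕ → R) (m : ℕ) :
    facpow (u : R) a m - facpow ((u⁻¹ : Rˣ) : R) a m =
      ((u : R) - (u⁻¹ : Rˣ)) *
        coeff m (X * symGeom u * ∏ j ∈ range m, lin (a (j + 1))) := by
  rw [facpow_eq_coeff, facpow_eq_coeff, ← map_sub, ← sub_mul, geom_sub_geom, ← coeff_C_mul,
    symGeom]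
  ring_nf

lemma heod_eq_coeff {p : ℕ} (y : Fin p → Rˣ) (a : ℕ → R) (hp : 0 < p) (m : ℤ) (N : ℕ)
    (hN : (N : ℤ) = m + (p - 1 : ℕ)) :
    heod y a m = ((y ⟨0, hp⟩ : R) - ((y ⟨0, hp⟩)⁻¹ : Rˣ)) *
      coeff N (X ^ p * (∏ k, symGeom (y k)) * ∏ j ∈ range N, lin (a (j + 1))) := by
  set L := ∏ j ∈ range N, lin (a (j + 1))
  have hX : X ^ p * (∏ k, symGeom (y k)) * L =
      X ^ (p - 1) * (X * (∏ k, symGeom (y k)) * L) := by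
    rw [← mul_assoc, ← mul_assoc, ← pow_succ, Nat.sub_add_cancel hp]
  rw [heod, hX, coeff_X_pow_mul']
  split_ifs with hm hle
  · have hprod : (geom (y ⟨0, hp⟩ : R) - geom (((y ⟨0, hp⟩)⁻¹ : Rˣ) : R)) *
        ∏ k ∈ univ.filter (· ≠ ⟨0, hp⟩), geom (y k : R) * geom (((y k)⁻¹ : Rˣ) : R) =
        C ((y ⟨0, hp⟩ : R) - ((y ⟨0, hp⟩)⁻¹ : Rˣ)) * (X * ∏ k, symGeom (y k)) := by
      rw [filter_ne', geom_sub_geom, ← mul_prod_erase univ (fun k => symGeom (y k)) (mem_univ _)]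
      simp only [symGeom]
      ring
    rw [hprod, show p + m.toNat - 1 = N by omega, show N - (p - 1) = m.toNat by omega,
      mul_assoc, coeff_C_mul, mul_assoc]
  · omega
  · rw [show N - (p - 1) = 0 by omega, mul_assoc, coeff_zero_X_mul, mul_zero]
  · rw [mul_zero]

end Series
/-- flagged Jacobi-Trudi identity for factorial difference characters. -/
theorem flagged_jacobi_trudi_eod {R : Type*} [CommRing R] (n : ℕ)
    (x : Fin n → Rˣ) (a : ℕ → R) (lam : Fin n → ℕ) :
    Matrix.det (Matrix.of fun i j : Fin n =>
        facpow ((x i : R)) a (lam j + (n - 1 - (j : ℕ)))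
          - facpow ((((x i)⁻¹ : Rˣ) : R)) a (lam j + (n - 1 - (j : ℕ)))) =
      (∏ i : Fin n, ∏ j ∈ Finset.Ioi i,
          ((x i : R) + (((x i)⁻¹ : Rˣ) : R) - (x j : R) - (((x j)⁻¹ : Rˣ) : R))) *
        Matrix.det (Matrix.of fun i j : Fin n =>
          heod (fun k : Fin (n - (i : ℕ)) =>
              x ⟨(i : ℕ) + (k : ℕ), by have := i.isLt; have := k.isLt; omega⟩) a
            ((lam j : ℤ) - (j : ℕ) + (i : ℕ))) := by
  let N : Fin n → ℕ := fun j => lam j + (n - 1 - (j : ℕ))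
  let g : Finset (Fin n) → Fin n → R := fun T j =>
    coeff (N j) (X ^ #T * (∏ l ∈ T, symGeom (x l)) * ∏ t ∈ range (N j), lin (a (t + 1)))
  have hg : IsDividedDifferenceFamily (fun i => (x i : R) + ((x i)⁻¹ : Rˣ)) g := by
    intro S i k hi hk hik
    ext j
    simp only [g, Pi.sub_apply, Pi.smul_apply, smul_eq_mul]
    rw [← map_sub, ← sub_mul, X_pow_card_mul_prod_insert_sub_insert _ _
      (fun i k => symGeom_sub_symGeom (x i) (x k)) hi hk hik, mul_assoc, coeff_C_mul]
  have hA : (Matrix.of fun i j : Fin n =>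
      facpow (x i : R) a (N j) - facpow (((x i)⁻¹ : Rˣ) : R) a (N j)).det =
      (∏ i, ((x i : R) - ((x i)⁻¹ : Rˣ))) * (Matrix.of fun i => g {i}).det := by
    rw [← Matrix.det_mul_column]
    congr 1
    ext i j
    simp [g, facpow_sub_facpow_inv]
  have hB : (Matrix.of fun i j : Fin n =>
      heod (fun k : Fin (n - (i : ℕ)) =>
          x ⟨(i : ℕ) + (k : ℕ), by have := i.isLt; have := k.isLt; omega⟩) a
        ((lam j : ℤ) - (j : ℕ) + (i : ℕ))).det =
      (∏ i, ((x i : R) - ((x i)⁻¹ : Rˣ))) * (Matrix.of fun i => g (Ici i)).det := by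
    rw [← Matrix.det_mul_column]
    congr 1
    ext i j
    rw [Matrix.of_apply, Matrix.of_apply, heod_eq_coeff _ a (by omega) _ (N j)
      (by simp only [N]; omega), ← prod_Ici_eq_prod_shift (fun l => symGeom (x l))]
    simp [g, Fin.card_Ici]
  rw [hA, hB, det_of_singleton_eq_prod_mul_det_of_Ici hg]
  simp only [sub_add_eq_sub_sub]
  ring
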